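/- arXiv:1106.1137 — 5 statements merged into one kernel-verified Lean document; each statement's English description precedes it below -/
import Mathlib

section
/- Let the sequence {m_k} be the confluent Prony moments of nodes ξ_1,…,ξ_n and magnitudes a_{i,j}, and let q_0, q_1, …, q_C ∈ ℂ be the coefficients of the polynomial q(x) = ∏_{i=1}^{n} (x − ξ_i)^{l_i} = Σ_{j=0}^{C} q_j x^j. Then for every k ∈ ℕ, Σ_{j=0}^{C} q_j m_{k+j} = 0; that is, {m_k} satisfies a linear recurrence of length at most C+1 whose characteristic polynomial is q. -/
/-!
The sequence `k ↦ (k)_p x^(k-p)` is the `p`-th derivative of `t ↦ t^k` at `x`, so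
`Σ_j q_j (k+j)_p x^(k+j-p)` is the `p`-th derivative of `t^k q(t)` at `x`. When `p < l_i` and
`x = ξ_i`, this polynomial has `x` as a root of multiplicity `> p`, so the derivative vanishes
there. The recurrence follows by linearity.
-/

open scoped BigOperators

noncomputable section

/-- The confluent Prony moments `m_k = Σ_i Σ_{j<l_i} a_{i,j} (k)_j ξ_i^{k-j}`,
where `(k)_j` is the falling factorial (so the term vanishes when `j > k`). -/
def pronyMoment {n : ℕ} (l : Fin n → ℕ) (ξ : Fin n → ℂ)
    (a : (i : Fin n) → Fin (l i) → ℂ) (k : ℕ) : ℂ :=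
  ∑ i, ∑ j : Fin (l i), a i j * (k.descFactorial j : ℂ) * ξ i ^ (k - (j : ℕ))

open Polynomial

namespace Polynomial

variable {R : Type*} [CommRing R]

theorem isRoot_iterate_derivative_of_pow_dvd {P : R[X]} {t : R} {l p : ℕ}
    (h : (X - C t) ^ l ∣ P) (hp : p < l) : (derivative^[p] P).IsRoot t :=
  dvd_iff_isRoot.mp <| (dvd_pow_self _ (Nat.sub_ne_zero_of_lt hp)).trans
    (pow_sub_dvd_iterate_derivative_of_pow_dvd _ h)

theorem sum_coeff_mul_descFactorial_mul_pow {Q : R[X]} {N : ℕ} (hQ : Q.natDegree < N)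
    (k p : ℕ) (x : R) :
    ∑ j ∈ Finset.range N, Q.coeff j * ((k + j).descFactorial p * x ^ (k + j - p)) =
      (derivative^[p] (X ^ k * Q)).eval x := by
  conv_rhs => rw [Q.as_sum_range_C_mul_X_pow' hQ, Finset.mul_sum, iterate_derivative_sum,
    eval_finsetSum]
  refine Finset.sum_congr rfl fun j _ => ?_
  rw [mul_left_comm (X ^ k), ← pow_add, iterate_derivative_C_mul,
    iterate_derivative_X_pow_eq_natCast_mul]
  simp

theorem sum_coeff_mul_descFactorial_mul_pow_eq_zero {Q : R[X]} {N : ℕ} (hQ : Q.natDegree < N)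
    {x : R} {l p : ℕ} (hdvd : (X - C x) ^ l ∣ Q) (hp : p < l) (k : ℕ) :
    ∑ j ∈ Finset.range N, Q.coeff j * ((k + j).descFactorial p * x ^ (k + j - p)) = 0 := by
  rw [sum_coeff_mul_descFactorial_mul_pow hQ]
  exact isRoot_iterate_derivative_of_pow_dvd (hdvd.mul_left _) hp

end Polynomial

theorem prony_moments_recurrence_general
    (n : ℕ) (l : Fin n → ℕ)
    (ξ : Fin n → ℂ) (a : (i : Fin n) → Fin (l i) → ℂ)
    (m : ℕ → ℂ) (hm : ∀ k : ℕ, m k = pronyMoment l ξ a k)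
    (C : ℕ) (hC : C = ∑ i, l i)
    (q : ℕ → ℂ)
    (hq : ∀ j : ℕ, q j = (∏ i, (Polynomial.X - Polynomial.C (ξ i)) ^ (l i)).coeff j) :
    ∀ k : ℕ, ∑ j ∈ Finset.range (C + 1), q j * m (k + j) = 0 := by
  intro k
  set Q : ℂ[X] := ∏ i, (X - Polynomial.C (ξ i)) ^ (l i)
  have hQ : Q.natDegree < C + 1 := by
    refine Nat.lt_succ_of_le ((natDegree_prod_le _ _).trans ?_)
    rw [hC]
    exact Finset.sum_le_sum fun i _ => by simp [natDegree_pow]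
  simp only [hm, pronyMoment, hq, Finset.mul_sum]
  rw [Finset.sum_comm]
  refine Finset.sum_eq_zero fun i _ => ?_
  rw [Finset.sum_comm]
  refine Finset.sum_eq_zero fun p _ => ?_
  simp_rw [mul_assoc, mul_left_comm (Q.coeff _) (a i p), ← Finset.mul_sum]
  rw [sum_coeff_mul_descFactorial_mul_pow_eq_zero hQ
    (Finset.dvd_prod_of_mem _ (Finset.mem_univ i)) p.2, mul_zero]

/-- if `q_0,…,q_C` are the coefficients of `q(x) = ∏_i (x − ξ_i)^{l_i}`
(with `C = Σ l_i`), then the confluent Prony moments satisfy the linear recurrence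
`Σ_{j=0}^{C} q_j m_{k+j} = 0` for every `k`. -/
theorem prony_moments_recurrence
    (n : ℕ) (hn : 1 ≤ n) (l : Fin n → ℕ) (hl : ∀ i, 1 ≤ l i)
    (ξ : Fin n → ℂ) (a : (i : Fin n) → Fin (l i) → ℂ)
    (m : ℕ → ℂ) (hm : ∀ k : ℕ, m k = pronyMoment l ξ a k)
    (C : ℕ) (hC : C = ∑ i, l i)
    (q : ℕ → ℂ)
    (hq : ∀ j : ℕ, q j = (∏ i, (Polynomial.X - Polynomial.C (ξ i)) ^ (l i)).coeff j) :
    ∀ k : ℕ, ∑ j ∈ Finset.range (C + 1), q j * m (k + j) = 0 :=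
  prony_moments_recurrence_general n l ξ a m hm C hC q hq
end
end

section
/- The determinant of the confluent Vandermonde matrix satisfies det U(ξ_1,l_1,…,ξ_n,l_n) = ∏_{1≤i<j≤n} (ξ_j − ξ_i)^{l_j l_i} · ∏_{μ=1}^{n} ∏_{ν=1}^{l_μ−1} ν!. -/
open scoped BigOperators

noncomputable section

open Polynomial Finset

lemma iterDeriv_pow_mul_eval (j : ℕ) : ∀ (q : ℂ[X]) (a : ℂ),
    (Polynomial.derivative^[j] ((X - C a) ^ j * q)).eval a = j.factorial * q.eval a := by
  induction j with
  | zero => intro q a; simp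
  | succ j ih =>
    intro q a
    rw [Function.iterate_succ_apply]
    have h : Polynomial.derivative ((X - C a) ^ (j + 1) * q)
        = (X - C a) ^ j * (C ((j : ℂ) + 1) * q + (X - C a) * Polynomial.derivative q) := by
      rw [Polynomial.derivative_mul, Polynomial.derivative_pow, Polynomial.derivative_X_sub_C]
      push_cast
      ring
    rw [h, ih]
    simp [Nat.factorial_succ]
    ring

lemma iterDeriv_eval_zero {j : ℕ} {p : ℂ[X]} {a : ℂ} (h : (X - C a) ^ (j + 1) ∣ p) :
    (Polynomial.derivative^[j] p).eval a = 0 := by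
  obtain ⟨q, rfl⟩ := h
  have h2 : (X - C a) ^ (j + 1) * q = (X - C a) ^ j * ((X - C a) * q) := by ring
  rw [h2, iterDeriv_pow_mul_eval]
  simp

lemma iterDeriv_eval_eq_sum {p : ℂ[X]} {N : ℕ} (hp : p.natDegree < N) (j : ℕ) (a : ℂ) :
    (Polynomial.derivative^[j] p).eval a
      = ∑ k ∈ Finset.range N, p.coeff k * ((k.descFactorial j : ℂ) * a ^ (k - j)) := by
  have hd : (Polynomial.derivative^[j] p).natDegree < N :=
    lt_of_le_of_lt (le_trans (p.natDegree_iterate_derivative j) (Nat.sub_le _ _)) hp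
  rw [eval_eq_sum_range' hd]
  simp only [Polynomial.coeff_iterate_derivative, nsmul_eq_mul]
  have hL : ∑ t ∈ Finset.range N, ((t + j).descFactorial j : ℂ) * p.coeff (t + j) * a ^ t
      = ∑ t ∈ Finset.range (N - j), ((t + j).descFactorial j : ℂ) * p.coeff (t + j) * a ^ t := by
    refine (Finset.sum_subset (Finset.range_subset_range.mpr (Nat.sub_le _ _)) ?_).symm
    intro t ht hnt
    have h1 := Finset.mem_range.mp ht
    have h2 : ¬ t < N - j := fun h => hnt (Finset.mem_range.mpr h)
    have hc : p.coeff (t + j) = 0 := by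
      apply Polynomial.coeff_eq_zero_of_natDegree_lt
      omega
    rw [hc]; ring
  have hR : ∑ k ∈ Finset.range N, p.coeff k * ((k.descFactorial j : ℂ) * a ^ (k - j))
      = ∑ k ∈ Finset.Ico (min j N) N, p.coeff k * ((k.descFactorial j : ℂ) * a ^ (k - j)) := by
    refine (Finset.sum_subset ?_ ?_).symm
    · rw [Finset.range_eq_Ico]; exact Finset.Ico_subset_Ico (Nat.zero_le _) le_rfl
    · intro k hk hnk
      have h1 := Finset.mem_range.mp hk
      have h2 : ¬ (min j N ≤ k ∧ k < N) := fun h => hnk (Finset.mem_Ico.mpr h)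
      have hk' : k < j := by omega
      rw [Nat.descFactorial_eq_zero_iff_lt.mpr hk']
      simp
  rw [hL, hR]
  rcases le_or_gt j N with hjN | hjN
  · rw [min_eq_left hjN, Finset.sum_Ico_eq_sum_range]
    apply Finset.sum_congr rfl
    intro t _
    have h3 : j + t - j = t := by omega
    rw [h3, Nat.add_comm j t]
    ring
  · have h1 : N - j = 0 := by omega
    have h2 : min j N = N := by omega
    rw [h1, h2]
    simp


/-- Offset of the `i`-th block of columns: the sum of the multiplicities of all previous blocks. -/
def blockOff {n : ℕ} (L : Fin n → ℕ) (i : Fin n) : ℕ := ∑ i' ∈ Finset.Iio i, L i'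

theorem blockOff_add_lt {n : ℕ} (L : Fin n → ℕ) (i : Fin n) {j : ℕ} (hj : j < L i) :
    blockOff L i + j < ∑ i', L i' := by
  have h1 : ∑ i' ∈ insert i (Finset.Iio i), L i' = ∑ i' ∈ Finset.Iio i, L i' + L i := by
    rw [Finset.sum_insert (by simp)]; ring
  have h2 : ∑ i' ∈ insert i (Finset.Iio i), L i' ≤ ∑ i', L i' :=
    Finset.sum_le_sum_of_subset (Finset.subset_univ _)
  unfold blockOff
  omega

/-- The flattened index of position `j` inside block `i`, when block `i` has size `L i`. -/
def encC {n : ℕ} (L : Fin n → ℕ) (i : Fin n) (j : Fin (L i)) : Fin (∑ i', L i') :=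
  ⟨blockOff L i + j, blockOff_add_lt L i j.isLt⟩

/-- The (square) confluent Vandermonde matrix on nodes `ξ_i` with multiplicities `L i`:
rows are indexed by `k = 0,…,(∑ L i)−1`; the entry in row `k` and column `j` of block `i`
is `(k)_j ξ_i^{k−j}` (zero when `j > k`). -/
def confVand {n : ℕ} (L : Fin n → ℕ) (ξ : Fin n → ℂ) :
    Matrix (Fin (∑ i, L i)) (Fin (∑ i, L i)) ℂ :=
  fun k c => ∑ i, ∑ j : Fin (L i),
    if c = encC L i j then ((k : ℕ).descFactorial j : ℂ) * ξ i ^ ((k : ℕ) - (j : ℕ)) else 0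

lemma blockOff_block_le {n : ℕ} (L : Fin n → ℕ) {i i' : Fin n} (h : i < i') :
    blockOff L i + L i ≤ blockOff L i' := by
  have hsub : insert i (Finset.Iio i) ⊆ Finset.Iio i' := by
    intro x hx
    rcases Finset.mem_insert.mp hx with rfl | hx
    · exact Finset.mem_Iio.mpr h
    · exact Finset.mem_Iio.mpr ((Finset.mem_Iio.mp hx).trans h)
  calc blockOff L i + L i = ∑ x ∈ insert i (Finset.Iio i), L x := by
        rw [Finset.sum_insert (by simp)]; unfold blockOff; ring
    _ ≤ _ := Finset.sum_le_sum_of_subset hsub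

lemma enc_inj {n : ℕ} (L : Fin n → ℕ) :
    Function.Injective (fun s : Σ i, Fin (L i) => encC L s.1 s.2) := by
  rintro ⟨i, j⟩ ⟨i', j'⟩ h
  simp only [encC, Fin.mk.injEq] at h
  have hii : i = i' := by
    by_contra hne
    rcases lt_or_gt_of_ne hne with hlt | hlt
    · have h1 := blockOff_block_le L hlt
      have h2 := j.isLt
      omega
    · have h1 := blockOff_block_le L hlt
      have h2 := j'.isLt
      omega
  subst hii
  have hjj : (j : ℕ) = j' := by omega
  rw [Fin.ext hjj]

def encE {n : ℕ} (L : Fin n → ℕ) : (Σ i, Fin (L i)) ≃ Fin (∑ i, L i) :=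
  Equiv.ofBijective _ ((Fintype.bijective_iff_injective_and_card _).2 ⟨enc_inj L, by simp⟩)

lemma encE_apply {n : ℕ} (L : Fin n → ℕ) (s : Σ i, Fin (L i)) :
    encE L s = encC L s.1 s.2 := rfl

lemma confVand_apply_enc {n : ℕ} (L : Fin n → ℕ) (ξ : Fin n → ℂ)
    (k : Fin (∑ i, L i)) (s : Σ i, Fin (L i)) :
    confVand L ξ k (encC L s.1 s.2)
      = ((k : ℕ).descFactorial s.2 : ℂ) * ξ s.1 ^ ((k : ℕ) - (s.2 : ℕ)) := by
  unfold confVand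
  rw [Finset.sum_sigma']
  rw [Finset.sum_eq_single s]
  · rw [if_pos rfl]
  · intro b _ hb
    rw [if_neg]
    intro h
    exact hb (enc_inj L ((Sigma.eta b) ▸ h.symm))
  · intro h
    exact absurd (Finset.mem_univ s) h

def Np {n : ℕ} (L : Fin n → ℕ) (ξ : Fin n → ℂ) (s : Σ i, Fin (L i)) : Polynomial ℂ :=
  (∏ i' ∈ Finset.Iio s.1, (X - C (ξ i')) ^ (L i')) * (X - C (ξ s.1)) ^ (s.2 : ℕ)

lemma Np_monic {n : ℕ} (L : Fin n → ℕ) (ξ : Fin n → ℂ) (s : Σ i, Fin (L i)) :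
    (Np L ξ s).Monic := by
  apply Polynomial.Monic.mul
  · exact monic_prod_of_monic _ _ (fun i' _ => (monic_X_sub_C _).pow _)
  · exact (monic_X_sub_C _).pow _

lemma Np_natDegree {n : ℕ} (L : Fin n → ℕ) (ξ : Fin n → ℂ) (s : Σ i, Fin (L i)) :
    (Np L ξ s).natDegree = blockOff L s.1 + (s.2 : ℕ) := by
  unfold Np
  rw [Polynomial.Monic.natDegree_mul
      (monic_prod_of_monic _ _ (fun i' _ => (monic_X_sub_C _).pow _))
      ((monic_X_sub_C _).pow _)]
  rw [Polynomial.natDegree_prod _ _ (fun i' _ => pow_ne_zero _ (X_sub_C_ne_zero _))]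
  simp [Polynomial.natDegree_pow, Polynomial.natDegree_X_sub_C, blockOff]

/-- the determinant of the confluent Vandermonde matrix is
`∏_{i<j} (ξ_j − ξ_i)^{l_j l_i} · ∏_μ ∏_{ν=1}^{l_μ−1} ν!`. -/
theorem confVand_det
    (n : ℕ) (l : Fin n → ℕ) (hl : ∀ i, 1 ≤ l i) (ξ : Fin n → ℂ) :
    (confVand l ξ).det =
      (∏ p ∈ Finset.univ.filter (fun p : Fin n × Fin n => p.1 < p.2),
          (ξ p.2 - ξ p.1) ^ (l p.2 * l p.1)) *
        ∏ μ, ∏ ν ∈ Finset.Icc 1 (l μ - 1), (ν.factorial : ℂ) := by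
  classical
  set e := encE l with he
  set T : Matrix (Fin (∑ i, l i)) (Fin (∑ i, l i)) ℂ :=
    fun m k => (Np l ξ (e.symm m)).coeff (k : ℕ) with hT
  have hdec : ∀ c : Fin (∑ i, l i), c = encC l (e.symm c).1 (e.symm c).2 := by
    intro c
    conv_lhs => rw [← Equiv.apply_symm_apply e c]
    rfl
  have hdeg : ∀ m : Fin (∑ i, l i), (Np l ξ (e.symm m)).natDegree = (m : ℕ) := by
    intro m
    rw [Np_natDegree]
    have h2 := congrArg Fin.val (hdec m)
    simp only [encC] at h2
    omega
  have hTtri : T.BlockTriangular OrderDual.toDual := by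
    intro m k h
    have hmk : (m : ℕ) < (k : ℕ) := h
    exact Polynomial.coeff_eq_zero_of_natDegree_lt (by rw [hdeg]; exact hmk)
  have hdetT : T.det = 1 := by
    rw [Matrix.det_of_lowerTriangular T hTtri]
    apply Finset.prod_eq_one
    intro m _
    show (Np l ξ (e.symm m)).coeff (m : ℕ) = 1
    rw [← hdeg m]
    exact (Np_monic l ξ (e.symm m)).coeff_natDegree
  have hTU : ∀ (m c : Fin (∑ i, l i)),
      (T * confVand l ξ) m c
        = (Polynomial.derivative^[((e.symm c).2 : ℕ)] (Np l ξ (e.symm m))).eval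
            (ξ (e.symm c).1) := by
    intro m c
    rw [Matrix.mul_apply]
    rw [iterDeriv_eval_eq_sum (N := ∑ i, l i) (by rw [hdeg]; exact m.isLt)]
    rw [← Fin.sum_univ_eq_sum_range (fun k =>
      (Np l ξ (e.symm m)).coeff k *
        ((k.descFactorial ((e.symm c).2 : ℕ) : ℂ) * ξ (e.symm c).1 ^ (k - ((e.symm c).2 : ℕ))))]
    apply Finset.sum_congr rfl
    intro k _
    conv_lhs => rw [hdec c]
    rw [confVand_apply_enc]
  have hMtri : (T * confVand l ξ).BlockTriangular id := by
    intro m c h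
    have hcm : (c : ℕ) < (m : ℕ) := h
    rw [hTU]
    apply iterDeriv_eval_zero
    have hcv := congrArg Fin.val (hdec c)
    have hmv := congrArg Fin.val (hdec m)
    simp only [encC] at hcv hmv
    rcases lt_trichotomy (e.symm c).1 (e.symm m).1 with hlt | heq | hgt
    · have h1 : (X - Polynomial.C (ξ (e.symm c).1)) ^ (l (e.symm c).1)
          ∣ ∏ i' ∈ Finset.Iio (e.symm m).1, (X - Polynomial.C (ξ i')) ^ (l i') :=
        Finset.dvd_prod_of_mem _ (Finset.mem_Iio.mpr hlt)
      have h2 : (X - Polynomial.C (ξ (e.symm c).1)) ^ (((e.symm c).2 : ℕ) + 1)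
          ∣ (X - Polynomial.C (ξ (e.symm c).1)) ^ (l (e.symm c).1) :=
        pow_dvd_pow _ (e.symm c).2.isLt
      exact (h2.trans h1).trans (dvd_mul_right _ _)
    · have hbo : blockOff l (e.symm c).1 = blockOff l (e.symm m).1 := by rw [heq]
      have hj : ((e.symm c).2 : ℕ) + 1 ≤ ((e.symm m).2 : ℕ) := by omega
      have hξ : ξ (e.symm c).1 = ξ (e.symm m).1 := by rw [heq]
      have h2 : (X - Polynomial.C (ξ (e.symm c).1)) ^ (((e.symm c).2 : ℕ) + 1)
          ∣ (X - Polynomial.C (ξ (e.symm m).1)) ^ (((e.symm m).2 : ℕ)) := by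
        rw [hξ]
        exact pow_dvd_pow _ hj
      exact h2.trans (dvd_mul_left _ _)
    · exfalso
      have h1 := blockOff_block_le l hgt
      have h2 := (e.symm m).2.isLt
      omega
  have hdiag : ∀ s : Σ i, Fin (l i),
      (T * confVand l ξ) (e s) (e s)
        = (((s.2 : ℕ)).factorial : ℂ) * ∏ i' ∈ Finset.Iio s.1, (ξ s.1 - ξ i') ^ (l i') := by
    intro s
    rw [hTU, Equiv.symm_apply_apply]
    rw [show Np l ξ s
        = (X - Polynomial.C (ξ s.1)) ^ ((s.2 : ℕ))
            * ∏ i' ∈ Finset.Iio s.1, (X - Polynomial.C (ξ i')) ^ (l i') from mul_comm _ _]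
    rw [iterDeriv_pow_mul_eval]
    rw [Polynomial.eval_prod]
    simp
  have hdet : (confVand l ξ).det = ∏ s : Σ i, Fin (l i),
      ((((s.2 : ℕ)).factorial : ℂ) * ∏ i' ∈ Finset.Iio s.1, (ξ s.1 - ξ i') ^ (l i')) := by
    rw [← one_mul (confVand l ξ).det, ← hdetT, ← Matrix.det_mul,
      Matrix.det_of_upperTriangular hMtri]
    rw [← Equiv.prod_comp e (fun m => (T * confVand l ξ) m m)]
    exact Finset.prod_congr rfl (fun s _ => hdiag s)
  rw [hdet, ← Finset.univ_sigma_univ, Finset.prod_sigma]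
  have hmain : ∀ i : Fin n, ∏ j : Fin (l i),
      (((j : ℕ).factorial : ℂ) * ∏ i' ∈ Finset.Iio i, (ξ i - ξ i') ^ (l i'))
      = (∏ ν ∈ Finset.Icc 1 (l i - 1), ((ν).factorial : ℂ))
        * ∏ i' ∈ Finset.Iio i, (ξ i - ξ i') ^ (l i' * l i) := by
    intro i
    rw [Finset.prod_mul_distrib, Finset.prod_const, Finset.card_univ, Fintype.card_fin]
    congr 1
    · rw [Fin.prod_univ_eq_prod_range (fun j => ((j.factorial : ℕ) : ℂ))]
      have hr : Finset.range (l i) = insert 0 (Finset.Icc 1 (l i - 1)) := by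
        ext x
        simp only [Finset.mem_range, Finset.mem_insert, Finset.mem_Icc]
        have := hl i
        omega
      rw [hr, Finset.prod_insert (by simp)]
      simp
    · rw [← Finset.prod_pow]
      apply Finset.prod_congr rfl
      intro i' _
      rw [← pow_mul]
  rw [Finset.prod_congr rfl (fun i _ => hmain i), Finset.prod_mul_distrib]
  rw [mul_comm]
  congr 1
  rw [Finset.prod_sigma']
  apply Finset.prod_nbij' (fun s => (s.2, s.1)) (fun p => ⟨p.2, p.1⟩)
  · intro s hs
    simp only [Finset.mem_sigma, Finset.mem_Iio] at hs
    simp [hs.2]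
  · intro p hp
    simp only [Finset.mem_filter] at hp
    simp [hp.2]
  · intro s _; rfl
  · intro p _; rfl
  · intro s hs
    simp only [Finset.mem_sigma, Finset.mem_Iio] at hs
    rw [Nat.mul_comm]
end
end

section
/- Let {m_k} be the confluent Prony moments and let M_C = (m_{s+t})_{0≤s,t≤C−1} be the C×C Hankel matrix built from them. Then M_C admits the factorization M_C = U B U^T, where U = U(ξ_1,l_1,…,ξ_n,l_n) is the confluent Vandermonde matrix and B = diag(B_1,…,B_n) is the block-diagonal matrix whose i-th block B_i is the l_i×l_i matrix with (s,t) entry (0-based) equal to binom(s+t, s)·a_{i,s+t} when s+t ≤ l_i−1 and 0 otherwise (so that the j-th anti-diagonal of B_i equals a_{i,j} multiplied by the binomial coefficients binom(j,s), s = 0,…,j). -/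
open scoped BigOperators

noncomputable section

/-- The `l×l` magnitude block `B_i`: the `(s,t)` entry (0-based) is
`binom(s+t,s)·a_{s+t}` when `s+t ≤ l−1`, and `0` otherwise. -/
def magBlock (l : ℕ) (a : Fin l → ℂ) : Matrix (Fin l) (Fin l) ℂ :=
  fun s t =>
    if h : (s : ℕ) + (t : ℕ) ≤ l - 1 then
      (((s : ℕ) + (t : ℕ)).choose (s : ℕ) : ℂ) *
        a ⟨(s : ℕ) + (t : ℕ), by have := s.isLt; omega⟩
    else 0

/-- The block-diagonal magnitude matrix `B = diag(B_1,…,B_n)`. -/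
def magBlockMat {n : ℕ} (l : Fin n → ℕ) (a : (i : Fin n) → Fin (l i) → ℂ) :
    Matrix (Fin (∑ i, l i)) (Fin (∑ i, l i)) ℂ :=
  fun r c => ∑ i, ∑ s : Fin (l i), ∑ t : Fin (l i),
    if r = encC l i s ∧ c = encC l i t then magBlock (l i) (a i) s t else 0

/-- The `C×C` Hankel matrix of the confluent Prony moments. -/
def pronyHankel {n : ℕ} (l : Fin n → ℕ) (ξ : Fin n → ℂ)
    (a : (i : Fin n) → Fin (l i) → ℂ) :
    Matrix (Fin (∑ i, l i)) (Fin (∑ i, l i)) ℂ :=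
  fun s t => pronyMoment l ξ a ((s : ℕ) + (t : ℕ))

/-
The entry of `U` in row `k` and column `(i, j)` is the value at `ξ_i` of the `j`-th derivative
of `X ^ k`. Since `B` is block diagonal, `(U B Uᵀ)_{s,t}` is a sum over the nodes of the
bilinear forms of the blocks `B_i`. Collecting the terms of such a form along the antidiagonals
`p + q = j`, the binomial weights of `B_i` are exactly those of the Leibniz rule for the `j`-th
derivative of `X ^ s * X ^ t = X ^ (s + t)`, so the `j`-th antidiagonal contributes
`a_{i,j} (s+t)_j ξ_i^(s+t-j)`, the corresponding summand of `m_{s+t}`.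
-/
open Polynomial Finset Matrix

theorem Matrix.mul_blockDiagonal'_mul_eq_sum {R ι l o : Type*} {m' n' : ι → Type*}
    [NonUnitalNonAssocSemiring R] [Fintype ι] [DecidableEq ι]
    [∀ i, Fintype (m' i)] [∀ i, Fintype (n' i)]
    (A : Matrix l (Σ i, m' i) R) (M : ∀ i, Matrix (m' i) (n' i) R)
    (B : Matrix (Σ i, n' i) o R) :
    A * blockDiagonal' M * B =
      ∑ i, A.submatrix id (Sigma.mk i) * M i * B.submatrix (Sigma.mk i) id := by
  ext r c
  have hrow : ∀ i q,
      (A * blockDiagonal' M) r ⟨i, q⟩ = (A.submatrix id (Sigma.mk i) * M i) r q := by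
    intro i q
    rw [mul_apply, mul_apply, Fintype.sum_sigma, sum_eq_single i]
    · simp
    · exact fun i' _ hi' => sum_eq_zero fun p _ => by
        rw [blockDiagonal'_apply_ne M p q hi', mul_zero]
    · simp
  simp only [mul_apply (M := A * blockDiagonal' M), Fintype.sum_sigma, hrow, sum_apply, mul_apply,
    submatrix_apply, id]

-- The Leibniz rule for the `j`-th derivative of `X ^ s * X ^ t`, evaluated at `x`.
theorem descFactorial_add_mul_pow_eq_sum_antidiagonal {R : Type*} [CommSemiring R] (x : R)
    (s t j : ℕ) :
    ((s + t).descFactorial j : R) * x ^ (s + t - j) =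
      ∑ pq ∈ antidiagonal j, (j.choose pq.1 : R) *
        ((s.descFactorial pq.1 : R) * x ^ (s - pq.1)) *
        ((t.descFactorial pq.2 : R) * x ^ (t - pq.2)) := by
  have h := congrArg (eval x) (iterate_derivative_mul (n := j) (X ^ t : R[X]) (X ^ s))
  simp only [← pow_add, iterate_derivative_X_pow_eq_C_mul, eval_mul, eval_C, eval_pow, eval_X,
    eval_finsetSum, eval_natCast, nsmul_eq_mul] at h
  rw [add_comm s t, h, Nat.sum_antidiagonal_eq_sum_range_succ
    (fun p q => (j.choose p : R) * ((s.descFactorial p : R) * x ^ (s - p)) *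
        ((t.descFactorial q : R) * x ^ (t - q)))]
  exact sum_congr rfl fun k _ => by ring

theorem sum_range_sum_antidiagonal {M : Type*} [AddCommMonoid M] (l : ℕ) (f : ℕ → ℕ → M) :
    ∑ j ∈ range l, ∑ pq ∈ antidiagonal j, f pq.1 pq.2 =
      ∑ p ∈ range l, ∑ q ∈ range l, if p + q < l then f p q else 0 := by
  set S := (range l ×ˢ range l).filter fun pq : ℕ × ℕ => pq.1 + pq.2 < l
  have hfiber : ∀ j ∈ range l, S.filter (fun pq => pq.1 + pq.2 = j) = antidiagonal j := by
    intro j hj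
    ext ⟨p, q⟩
    simp only [S, mem_filter, mem_product, mem_range, HasAntidiagonal.mem_antidiagonal] at hj ⊢
    omega
  rw [← sum_congr rfl fun j hj => congrArg (∑ pq ∈ ·, f pq.1 pq.2) (hfiber j hj),
    sum_fiberwise_of_maps_to (fun pq hpq => by simpa [S] using (mem_filter.1 hpq).2),
    sum_filter, sum_product]

theorem encC_eq_finSigmaFinEquiv {n : ℕ} (L : Fin n → ℕ) (i : Fin n) (j : Fin (L i)) :
    encC L i j = finSigmaFinEquiv ⟨i, j⟩ := by
  have hIio : (univ : Finset (Fin i)).map (Fin.castLEEmb i.2.le) = Iio i := by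
    ext k
    simp only [mem_map, mem_univ, true_and, mem_Iio]
    exact ⟨fun ⟨k', hk'⟩ => hk' ▸ k'.2, fun hk => ⟨⟨k, hk⟩, rfl⟩⟩
  ext
  rw [finSigmaFinEquiv_apply, encC, Fin.val_mk, blockOff, ← hIio, sum_map]
  rfl

def confVandBlock {R : Type*} [CommSemiring R] (N l : ℕ) (x : R) : Matrix (Fin N) (Fin l) R :=
  of fun k j => ((k : ℕ).descFactorial j : R) * x ^ ((k : ℕ) - (j : ℕ))

theorem confVand_eq_submatrix {n : ℕ} (L : Fin n → ℕ) (ξ : Fin n → ℂ) :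
    confVand L ξ = (of fun k (c : Σ i, Fin (L i)) =>
      confVandBlock (∑ i, L i) (L c.1) (ξ c.1) k c.2).submatrix id finSigmaFinEquiv.symm := by
  ext k c
  obtain ⟨x, rfl⟩ := finSigmaFinEquiv.surjective c
  simp only [confVand, encC_eq_finSigmaFinEquiv, Equiv.apply_eq_iff_eq, submatrix_apply, id,
    Equiv.symm_apply_apply, of_apply, confVandBlock]
  simp only [← Fintype.sum_sigma', Fintype.sum_ite_eq]

theorem magBlockMat_eq_submatrix {n : ℕ} (l : Fin n → ℕ)
    (a : (i : Fin n) → Fin (l i) → ℂ) :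
    magBlockMat l a = (blockDiagonal' fun i => magBlock (l i) (a i)).submatrix
      finSigmaFinEquiv.symm finSigmaFinEquiv.symm := by
  ext r c
  simp only [magBlockMat, encC_eq_finSigmaFinEquiv]
  obtain ⟨⟨i, p⟩, rfl⟩ := finSigmaFinEquiv.surjective r
  obtain ⟨⟨i', q⟩, rfl⟩ := finSigmaFinEquiv.surjective c
  simp only [Equiv.apply_eq_iff_eq, submatrix_apply, Equiv.symm_apply_apply, Sigma.mk.inj_iff]
  by_cases h : i = i'
  · subst h
    rw [sum_eq_single i]
    · simp [ite_and]
    · simp +contextual [eq_comm]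
    · simp
  · rw [blockDiagonal'_apply_ne _ _ _ h]
    refine sum_eq_zero fun b _ => sum_eq_zero fun s _ => sum_eq_zero fun t _ => if_neg ?_
    simp only [Equiv.apply_eq_iff_eq, Sigma.mk.inj_iff]
    rintro ⟨⟨rfl, -⟩, rfl, -⟩
    exact h rfl

theorem confVandBlock_mul_magBlock_mul_transpose_apply (N l : ℕ) (x : ℂ) (a : Fin l → ℂ)
    (s t : Fin N) :
    (confVandBlock N l x * magBlock l a * (confVandBlock N l x)ᵀ) s t =
      ∑ j : Fin l, a j * (((s : ℕ) + t).descFactorial j : ℂ) * x ^ ((s : ℕ) + t - j) := by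
  set A : ℕ → ℂ := fun j => if h : j < l then a ⟨j, h⟩ else 0
  set W : ℕ → ℕ → ℂ := fun k j => (k.descFactorial j : ℂ) * x ^ (k - j)
  have hB : ∀ p q : Fin l, magBlock l a p q =
      if (p : ℕ) + q < l then ((p + q : ℕ).choose p : ℂ) * A (p + q) else 0 := by
    intro p q
    unfold magBlock
    split_ifs with h₁ h₂ h₂ <;> first | omega | simp [A, dif_pos h₂]
  set f : ℕ → ℕ → ℂ := fun p q => A (p + q) * ((p + q).choose p * W s p * W t q)
  calc (confVandBlock N l x * magBlock l a * (confVandBlock N l x)ᵀ) s t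
      = ∑ q : Fin l, ∑ p : Fin l, if (p : ℕ) + q < l then f p q else 0 := by
        simp only [mul_apply, sum_mul, transpose_apply, confVandBlock, of_apply, hB]
        refine sum_congr rfl fun q _ => sum_congr rfl fun p _ => ?_
        split_ifs
        · simp only [f, W]; ring
        · simp
    _ = ∑ p ∈ range l, ∑ q ∈ range l, if p + q < l then f p q else 0 := by
        rw [sum_comm,
          Fin.sum_univ_eq_sum_range (fun p => ∑ q : Fin l, if p + q < l then f p q else 0)]
        exact sum_congr rfl fun p _ =>
          Fin.sum_univ_eq_sum_range (fun q => if p + q < l then f p q else 0) l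
    _ = ∑ j ∈ range l, A j * ((s + t : ℕ).descFactorial j * x ^ ((s + t : ℕ) - j)) := by
        rw [← sum_range_sum_antidiagonal]
        refine sum_congr rfl fun j _ => ?_
        rw [descFactorial_add_mul_pow_eq_sum_antidiagonal, mul_sum]
        refine sum_congr rfl fun pq hpq => ?_
        simp only [f, W, HasAntidiagonal.mem_antidiagonal.1 hpq]
    _ = _ := by
        rw [← Fin.sum_univ_eq_sum_range
          (fun j => A j * ((s + t : ℕ).descFactorial j * x ^ ((s + t : ℕ) - j)))]
        exact sum_congr rfl fun j _ => by simp only [A, dif_pos j.2]; ring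

theorem pronyHankel_factorization_general
    (n : ℕ) (l : Fin n → ℕ)
    (ξ : Fin n → ℂ) (a : (i : Fin n) → Fin (l i) → ℂ) :
    pronyHankel l ξ a = confVand l ξ * magBlockMat l a * (confVand l ξ).transpose := by
  rw [confVand_eq_submatrix, magBlockMat_eq_submatrix, transpose_submatrix, submatrix_mul_equiv,
    submatrix_mul_equiv, submatrix_id_id, mul_blockDiagonal'_mul_eq_sum]
  ext s t
  simp only [pronyHankel, pronyMoment, Matrix.sum_apply]
  exact sum_congr rfl fun i _ => (confVandBlock_mul_magBlock_mul_transpose_apply _ _ _ _ s t).symm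

/-- the Hankel matrix `M_C = (m_{s+t})` of the confluent Prony moments
factorizes as `M_C = U B Uᵀ`, where `U` is the confluent Vandermonde matrix and
`B = diag(B_1,…,B_n)` is the block-diagonal magnitude matrix. -/
theorem pronyHankel_factorization
    (n : ℕ) (hn : 1 ≤ n) (l : Fin n → ℕ) (hl : ∀ i, 1 ≤ l i)
    (ξ : Fin n → ℂ) (a : (i : Fin n) → Fin (l i) → ℂ) :
    pronyHankel l ξ a = confVand l ξ * magBlockMat l a * (confVand l ξ).transpose :=
  pronyHankel_factorization_general n l ξ a
end
end

section
/- The confluent Prony moments determine the parameters uniquely: suppose two parameter collections (n, (l_i), (ξ_i), (a_{i,j})) and (n', (l'_i), (ξ'_i), (a'_{i,j})), each with pairwise distinct nodes and with all highest magnitudes a_{i,l_i−1} and a'_{i,l'_i−1} nonzero, satisfy Σ_{i=1}^{n} l_i = Σ_{i=1}^{n'} l'_i = C and produce equal confluent Prony moments m_k = m'_k for all k = 0, 1, …, 2C. Then n = n' and there exists a bijection σ of {1,…,n} such that ξ'_i = ξ_{σ(i)}, l'_i = l_{σ(i)}, and a'_{i,j} = a_{σ(i),j} for all 1 ≤ i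 ≤ n and 0 ≤ j ≤ l'_i−1. -/
open scoped BigOperators

noncomputable section

namespace PronyAux

open Polynomial Finset

private lemma eval_iter_deriv_root (c : ℂ) (r s : ℕ) (q : Polynomial ℂ) (hs : s < r) :
    (Polynomial.derivative^[s] ((X - C c) ^ r * q)).eval c = 0 := by
  rw [Polynomial.iterate_derivative_mul, Polynomial.eval_finset_sum]
  refine Finset.sum_eq_zero fun k hk => ?_
  rw [Finset.mem_range] at hk
  have h1 : r - (s - k) ≠ 0 := by omega
  rw [Polynomial.iterate_derivative_X_sub_pow]
  simp [nsmul_eq_mul, sub_self, zero_pow h1]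

private lemma eval_iter_deriv_self (c : ℂ) (s : ℕ) (q : Polynomial ℂ) :
    (Polynomial.derivative^[s] ((X - C c) ^ s * q)).eval c = (s.factorial : ℂ) * q.eval c := by
  rw [Polynomial.iterate_derivative_mul, Polynomial.eval_finset_sum]
  rw [Finset.sum_eq_single 0]
  · simp [Polynomial.iterate_derivative_X_sub_pow_self, nsmul_eq_mul]
  · intro k hk hk0
    rw [Finset.mem_range] at hk
    have h2 : s - (s - k) = k := by omega
    rw [Polynomial.iterate_derivative_X_sub_pow, h2]
    simp [nsmul_eq_mul, sub_self, zero_pow hk0]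
  · intro h
    exact absurd (Finset.mem_range.mpr (Nat.succ_pos s)) h

private lemma prony_core (S : Finset ℂ) (M : ℂ → ℕ) (b : ℂ → ℕ → ℂ) (N : ℕ)
    (hM : ∑ c ∈ S, M c ≤ N)
    (hmom : ∀ k, k ≤ N → ∑ c ∈ S, ∑ s ∈ Finset.range (M c),
      b c s * (k.descFactorial s : ℂ) * c ^ (k - s) = 0) :
    ∀ c ∈ S, ∀ s < M c, b c s = 0 := by
  have key : ∀ p : Polynomial ℂ, p.natDegree ≤ N →
      ∑ c ∈ S, ∑ s ∈ Finset.range (M c),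
        b c s * (Polynomial.derivative^[s] p).eval c = 0 := by
    intro p hp
    have hrep : p = ∑ k ∈ Finset.range (N + 1), Polynomial.C (p.coeff k) * X ^ k := by
      conv_lhs => rw [Polynomial.as_sum_range' p (N + 1) (Nat.lt_succ_of_le hp)]
      exact Finset.sum_congr rfl fun k _ => (Polynomial.C_mul_X_pow_eq_monomial).symm
    calc (∑ c ∈ S, ∑ s ∈ Finset.range (M c), b c s * (Polynomial.derivative^[s] p).eval c)
        = ∑ c ∈ S, ∑ s ∈ Finset.range (M c), ∑ k ∈ Finset.range (N + 1),
            p.coeff k * (b c s * (k.descFactorial s : ℂ) * c ^ (k - s)) := by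
          refine Finset.sum_congr rfl fun c _ => Finset.sum_congr rfl fun s _ => ?_
          conv_lhs => rw [hrep]
          rw [Polynomial.iterate_derivative_sum, Polynomial.eval_finset_sum, Finset.mul_sum]
          refine Finset.sum_congr rfl fun k _ => ?_
          rw [Polynomial.iterate_derivative_C_mul, Polynomial.iterate_derivative_X_pow_eq_C_mul,
            Polynomial.eval_mul, Polynomial.eval_C, Polynomial.eval_mul, Polynomial.eval_C,
            Polynomial.eval_pow, Polynomial.eval_X]
          ring
      _ = ∑ c ∈ S, ∑ k ∈ Finset.range (N + 1), ∑ s ∈ Finset.range (M c),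
            p.coeff k * (b c s * (k.descFactorial s : ℂ) * c ^ (k - s)) :=
          Finset.sum_congr rfl fun c _ => Finset.sum_comm
      _ = ∑ k ∈ Finset.range (N + 1), ∑ c ∈ S, ∑ s ∈ Finset.range (M c),
            p.coeff k * (b c s * (k.descFactorial s : ℂ) * c ^ (k - s)) := Finset.sum_comm
      _ = 0 := by
          refine Finset.sum_eq_zero fun k hk => ?_
          have hkN : k ≤ N := by rw [Finset.mem_range] at hk; omega
          have := hmom k hkN
          calc (∑ c ∈ S, ∑ s ∈ Finset.range (M c),
                  p.coeff k * (b c s * (k.descFactorial s : ℂ) * c ^ (k - s)))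
              = p.coeff k * ∑ c ∈ S, ∑ s ∈ Finset.range (M c),
                  b c s * (k.descFactorial s : ℂ) * c ^ (k - s) := by
                rw [Finset.mul_sum]
                exact Finset.sum_congr rfl fun c _ => (Finset.mul_sum _ _ _).symm
            _ = 0 := by rw [this, mul_zero]
  intro c₀ hc₀
  by_contra hcon
  push_neg at hcon
  obtain ⟨s₁, hs₁lt, hs₁ne⟩ := hcon
  classical
  set T : Finset ℕ := (Finset.range (M c₀)).filter (fun s => b c₀ s ≠ 0) with hT
  have hTne : T.Nonempty := ⟨s₁, Finset.mem_filter.mpr ⟨Finset.mem_range.mpr hs₁lt, hs₁ne⟩⟩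
  set s₀ := T.max' hTne with hs₀
  have hs₀T : s₀ ∈ T := T.max'_mem hTne
  have hs₀lt : s₀ < M c₀ := Finset.mem_range.mp (Finset.mem_filter.mp hs₀T).1
  have hs₀ne : b c₀ s₀ ≠ 0 := (Finset.mem_filter.mp hs₀T).2
  have hmax : ∀ s ∈ T, s ≤ s₀ := fun s hs => T.le_max' s hs
  set Q : Polynomial ℂ := ∏ u ∈ S.erase c₀, (X - Polynomial.C u) ^ (M u) with hQ
  have hQmonic : Q.Monic := Polynomial.monic_prod_of_monic _ _
    (fun u _ => (Polynomial.monic_X_sub_C u).pow (M u))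
  have hQdeg : Q.natDegree = ∑ u ∈ S.erase c₀, M u := by
    rw [hQ, Polynomial.natDegree_prod]
    · exact Finset.sum_congr rfl fun u _ => by
        rw [Polynomial.natDegree_pow, Polynomial.natDegree_X_sub_C, mul_one]
    · exact fun u _ => pow_ne_zero _ (Polynomial.X_sub_C_ne_zero u)
  set p : Polynomial ℂ := (X - Polynomial.C c₀) ^ s₀ * Q with hp
  have hsum : M c₀ + ∑ u ∈ S.erase c₀, M u = ∑ u ∈ S, M u := Finset.add_sum_erase S M hc₀
  have hpdeg : p.natDegree ≤ N := by
    rw [hp, Polynomial.natDegree_mul (pow_ne_zero _ (Polynomial.X_sub_C_ne_zero c₀))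
      hQmonic.ne_zero, Polynomial.natDegree_pow, Polynomial.natDegree_X_sub_C, mul_one, hQdeg]
    omega
  have hkey := key p hpdeg
  rw [← Finset.add_sum_erase S _ hc₀] at hkey
  have herase : ∑ c ∈ S.erase c₀, ∑ s ∈ Finset.range (M c),
      b c s * (Polynomial.derivative^[s] p).eval c = 0 := by
    refine Finset.sum_eq_zero fun c hc => Finset.sum_eq_zero fun s hs => ?_
    have hq : p = (X - Polynomial.C c) ^ (M c) *
        ((X - Polynomial.C c₀) ^ s₀ *
          ∏ u ∈ (S.erase c₀).erase c, (X - Polynomial.C u) ^ (M u)) := by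
      rw [hp, hQ, ← Finset.mul_prod_erase _ _ hc]; ring
    rw [hq, eval_iter_deriv_root c (M c) s _ (Finset.mem_range.mp hs), mul_zero]
  rw [herase, add_zero] at hkey
  rw [Finset.sum_eq_single s₀] at hkey
  · have hQeval : Q.eval c₀ ≠ 0 := by
      rw [hQ, Polynomial.eval_prod]
      refine Finset.prod_ne_zero_iff.mpr fun u hu => ?_
      have hne : u ≠ c₀ := (Finset.mem_erase.mp hu).1
      simp only [Polynomial.eval_pow, Polynomial.eval_sub, Polynomial.eval_X, Polynomial.eval_C]
      exact pow_ne_zero _ (sub_ne_zero.mpr (Ne.symm hne))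
    rw [hp, eval_iter_deriv_self] at hkey
    have : (s₀.factorial : ℂ) ≠ 0 := Nat.cast_ne_zero.mpr s₀.factorial_ne_zero
    exact hs₀ne (by
      rcases mul_eq_zero.mp hkey with h | h
      · exact h
      · exact absurd h (mul_ne_zero this hQeval))
  · intro s hsrange hsne
    rcases lt_or_gt_of_ne hsne with hlt | hgt
    · rw [hp, eval_iter_deriv_root c₀ s₀ s Q hlt, mul_zero]
    · have : b c₀ s = 0 := by
        by_contra hne
        exact absurd (hmax s (Finset.mem_filter.mpr ⟨hsrange, hne⟩)) (by omega)
      rw [this, zero_mul]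
  · intro h
    exact absurd (Finset.mem_range.mpr hs₀lt) h

def extCoeff {n : ℕ} (l : Fin n → ℕ) (ξ : Fin n → ℂ)
    (a : (i : Fin n) → Fin (l i) → ℂ) (c : ℂ) (s : ℕ) : ℂ :=
  ∑ i, if h : ξ i = c ∧ s < l i then a i ⟨s, h.2⟩ else 0

def extMult {n : ℕ} (l : Fin n → ℕ) (ξ : Fin n → ℂ) (c : ℂ) : ℕ :=
  ∑ i, if ξ i = c then l i else 0

variable {n : ℕ} {l : Fin n → ℕ} {ξ : Fin n → ℂ} {a : (i : Fin n) → Fin (l i) → ℂ}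

lemma extCoeff_eq (hinj : Function.Injective ξ) (i : Fin n) (s : ℕ) (hs : s < l i) :
    extCoeff l ξ a (ξ i) s = a i ⟨s, hs⟩ := by
  rw [extCoeff, Finset.sum_eq_single i]
  · rw [dif_pos ⟨rfl, hs⟩]
  · intro j _ hj
    rw [dif_neg]
    rintro ⟨h1, -⟩
    exact hj (hinj h1)
  · intro h; exact absurd (Finset.mem_univ i) h

lemma extCoeff_eq_zero_of_ge (hinj : Function.Injective ξ) (i : Fin n) (s : ℕ) (hs : l i ≤ s) :
    extCoeff l ξ a (ξ i) s = 0 := by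
  rw [extCoeff]
  refine Finset.sum_eq_zero fun j _ => ?_
  rw [dif_neg]
  rintro ⟨h1, h2⟩
  exact absurd h2 (by have := hinj h1; subst this; omega)

lemma extCoeff_eq_zero_of_not_mem {c : ℂ} (hc : ∀ i, ξ i ≠ c) (s : ℕ) :
    extCoeff l ξ a c s = 0 := by
  rw [extCoeff]
  exact Finset.sum_eq_zero fun j _ => dif_neg (fun h => hc j h.1)

lemma extMult_eq (hinj : Function.Injective ξ) (i : Fin n) : extMult l ξ (ξ i) = l i := by
  rw [extMult, Finset.sum_eq_single i (fun j _ hj => if_neg fun h => hj (hinj h))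
    (fun h => absurd (Finset.mem_univ i) h), if_pos rfl]

lemma extMult_sum {S : Finset ℂ} (hS : ∀ i, ξ i ∈ S) :
    ∑ c ∈ S, extMult l ξ c = ∑ i, l i := by
  simp only [extMult]
  rw [Finset.sum_comm]
  refine Finset.sum_congr rfl fun i _ => ?_
  rw [Finset.sum_ite_eq S (ξ i) (fun _ => l i), if_pos (hS i)]

lemma ext_transfer (hinj : Function.Injective ξ) {S : Finset ℂ} (hS : ∀ i, ξ i ∈ S)
    {M : ℂ → ℕ} (hM : ∀ c, extMult l ξ c ≤ M c) (k : ℕ) :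
    ∑ c ∈ S, ∑ s ∈ Finset.range (M c),
      extCoeff l ξ a c s * (k.descFactorial s : ℂ) * c ^ (k - s)
      = pronyMoment l ξ a k := by
  simp only [extCoeff, Finset.sum_mul]
  have step1 : ∀ c ∈ S, ∑ s ∈ Finset.range (M c), ∑ i,
        (if h : ξ i = c ∧ s < l i then a i ⟨s, h.2⟩ else 0) * (k.descFactorial s : ℂ) * c ^ (k - s)
      = ∑ i, ∑ s ∈ Finset.range (M c),
        (if h : ξ i = c ∧ s < l i then a i ⟨s, h.2⟩ else 0) * (k.descFactorial s : ℂ)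
          * c ^ (k - s) :=
    fun c _ => Finset.sum_comm
  rw [Finset.sum_congr rfl step1, Finset.sum_comm]
  rw [pronyMoment]
  refine Finset.sum_congr rfl fun i _ => ?_
  rw [Finset.sum_eq_single (ξ i)]
  · have hle : l i ≤ M (ξ i) := by
      have := hM (ξ i); rw [extMult_eq hinj] at this; exact this
    rw [← Finset.sum_subset (Finset.range_subset_range.mpr hle) (fun s _ hs => by
      rw [dif_neg, zero_mul, zero_mul]
      rintro ⟨-, h2⟩
      exact absurd h2 (by rw [Finset.mem_range] at hs; omega))]
    rw [← Fin.sum_univ_eq_sum_range (fun s =>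
      (if h : ξ i = ξ i ∧ s < l i then a i ⟨s, h.2⟩ else 0) * (k.descFactorial s : ℂ)
        * (ξ i) ^ (k - s)) (l i)]
    refine Finset.sum_congr rfl fun j _ => ?_
    rw [dif_pos ⟨rfl, j.isLt⟩]
  · intro c _ hc
    refine Finset.sum_eq_zero fun s _ => ?_
    rw [dif_neg (fun h => hc h.1.symm), zero_mul, zero_mul]
  · intro h
    exact absurd (hS i) h

end PronyAux

open PronyAux Finset

/-- uniqueness of the parameters of a confluent Prony system.  If two
parameter collections (with pairwise distinct nodes and nonzero highest magnitudes,
each of total multiplicity `C`) produce the same moments `m_0, …, m_{2C}`, then they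
coincide up to a permutation of the nodes. -/
theorem prony_parameters_unique
    (n n' : ℕ) (hn : 1 ≤ n) (hn' : 1 ≤ n')
    (l : Fin n → ℕ) (hl : ∀ i, 1 ≤ l i) (l' : Fin n' → ℕ) (hl' : ∀ i, 1 ≤ l' i)
    (ξ : Fin n → ℂ) (ξ' : Fin n' → ℂ)
    (a : (i : Fin n) → Fin (l i) → ℂ) (a' : (i : Fin n') → Fin (l' i) → ℂ)
    (hdist : ∀ i j : Fin n, i ≠ j → ξ i ≠ ξ j)
    (hdist' : ∀ i j : Fin n', i ≠ j → ξ' i ≠ ξ' j)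
    (hhigh : ∀ i, a i ⟨l i - 1, by have := hl i; omega⟩ ≠ 0)
    (hhigh' : ∀ i, a' i ⟨l' i - 1, by have := hl' i; omega⟩ ≠ 0)
    (C : ℕ) (hC : ∑ i, l i = C) (hC' : ∑ i, l' i = C)
    (hmom : ∀ k : ℕ, k ≤ 2 * C → pronyMoment l ξ a k = pronyMoment l' ξ' a' k) :
    n = n' ∧
      ∃ σ : Fin n' ≃ Fin n, ∀ i : Fin n',
        ξ' i = ξ (σ i) ∧
          ∃ h : l' i = l (σ i), ∀ j : Fin (l' i), a' i j = a (σ i) (Fin.cast h j) := by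
  classical
  have hinj : Function.Injective ξ := fun i j h => by
    by_contra hne; exact hdist i j hne h
  have hinj' : Function.Injective ξ' := fun i j h => by
    by_contra hne; exact hdist' i j hne h
  set S : Finset ℂ := (Finset.image ξ Finset.univ) ∪ (Finset.image ξ' Finset.univ) with hS
  have hSξ : ∀ i, ξ i ∈ S := fun i =>
    Finset.mem_union_left _ (Finset.mem_image_of_mem ξ (Finset.mem_univ i))
  have hSξ' : ∀ i, ξ' i ∈ S := fun i =>
    Finset.mem_union_right _ (Finset.mem_image_of_mem ξ' (Finset.mem_univ i))
  set M : ℂ → ℕ := fun c => max (extMult l ξ c) (extMult l' ξ' c) with hM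
  have hM1 : ∀ c, extMult l ξ c ≤ M c := fun c => le_max_left _ _
  have hM2 : ∀ c, extMult l' ξ' c ≤ M c := fun c => le_max_right _ _
  have hMsum : ∑ c ∈ S, M c ≤ 2 * C := by
    calc ∑ c ∈ S, M c ≤ ∑ c ∈ S, (extMult l ξ c + extMult l' ξ' c) :=
          Finset.sum_le_sum fun c _ => by simp only [hM]; omega
      _ = (∑ c ∈ S, extMult l ξ c) + ∑ c ∈ S, extMult l' ξ' c := Finset.sum_add_distrib
      _ = C + C := by rw [extMult_sum hSξ, extMult_sum hSξ', hC, hC']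
      _ ≤ 2 * C := by omega
  have hmom0 : ∀ k, k ≤ 2 * C → ∑ c ∈ S, ∑ s ∈ Finset.range (M c),
      (extCoeff l ξ a c s - extCoeff l' ξ' a' c s) * (k.descFactorial s : ℂ) * c ^ (k - s)
        = 0 := by
    intro k hk
    have : ∑ c ∈ S, ∑ s ∈ Finset.range (M c),
        (extCoeff l ξ a c s - extCoeff l' ξ' a' c s) * (k.descFactorial s : ℂ) * c ^ (k - s)
        = (∑ c ∈ S, ∑ s ∈ Finset.range (M c),
            extCoeff l ξ a c s * (k.descFactorial s : ℂ) * c ^ (k - s))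
          - ∑ c ∈ S, ∑ s ∈ Finset.range (M c),
            extCoeff l' ξ' a' c s * (k.descFactorial s : ℂ) * c ^ (k - s) := by
      rw [← Finset.sum_sub_distrib]
      refine Finset.sum_congr rfl fun c _ => ?_
      rw [← Finset.sum_sub_distrib]
      refine Finset.sum_congr rfl fun s _ => ?_
      ring
    rw [this, ext_transfer hinj hSξ hM1 k, ext_transfer hinj' hSξ' hM2 k, hmom k hk, sub_self]
  have hB := prony_core S M (fun c s => extCoeff l ξ a c s - extCoeff l' ξ' a' c s)
    (2 * C) hMsum hmom0
  have hEq : ∀ c ∈ S, ∀ s < M c, extCoeff l ξ a c s = extCoeff l' ξ' a' c s :=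
    fun c hc s hs => sub_eq_zero.mp (hB c hc s hs)
  -- every primed node is an unprimed node
  have hex : ∀ i' : Fin n', ∃ i, ξ i = ξ' i' := by
    intro i'
    by_contra h
    push_neg at h
    have hs : l' i' - 1 < M (ξ' i') := by
      have h1 : extMult l' ξ' (ξ' i') = l' i' := extMult_eq hinj' i'
      have := hM2 (ξ' i')
      have := hl' i'
      omega
    have heq := hEq (ξ' i') (hSξ' i') (l' i' - 1) hs
    rw [extCoeff_eq_zero_of_not_mem h, extCoeff_eq hinj' i' (l' i' - 1)
      (by have := hl' i'; omega)] at heq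
    exact hhigh' i' heq.symm
  have hex' : ∀ i : Fin n, ∃ i', ξ' i' = ξ i := by
    intro i
    by_contra h
    push_neg at h
    have hs : l i - 1 < M (ξ i) := by
      have h1 : extMult l ξ (ξ i) = l i := extMult_eq hinj i
      have := hM1 (ξ i)
      have := hl i
      omega
    have heq := hEq (ξ i) (hSξ i) (l i - 1) hs
    rw [extCoeff_eq_zero_of_not_mem h, extCoeff_eq hinj i (l i - 1)
      (by have := hl i; omega)] at heq
    exact hhigh i heq
  choose σ hσ using hex
  choose τ hτ using hex'
  have hσinj : Function.Injective σ := fun i j h =>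
    hinj' (by rw [← hσ i, ← hσ j, h])
  have hτinj : Function.Injective τ := fun i j h =>
    hinj (by rw [← hτ i, ← hτ j, h])
  have hcard : n = n' := by
    have h1 : n ≤ n' := by simpa using Fintype.card_le_of_injective τ hτinj
    have h2 : n' ≤ n := by simpa using Fintype.card_le_of_injective σ hσinj
    omega
  have hbij : Function.Bijective σ :=
    (Fintype.bijective_iff_injective_and_card σ).mpr ⟨hσinj, by simp [hcard]⟩
  refine ⟨hcard, Equiv.ofBijective σ hbij, fun i' => ?_⟩
  have hcξ : ξ' i' = ξ (σ i') := (hσ i').symm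
  refine ⟨hcξ, ?_⟩
  have hlen : l' i' = l (σ i') := by
    rcases lt_trichotomy (l' i') (l (σ i')) with hlt | heq | hgt
    · exfalso
      have hs : l (σ i') - 1 < M (ξ' i') := by
        have h1 : extMult l ξ (ξ' i') = l (σ i') := by
          rw [hcξ]; exact extMult_eq hinj (σ i')
        have := hM1 (ξ' i')
        have := hl (σ i')
        omega
      have heq2 := hEq (ξ' i') (hSξ' i') (l (σ i') - 1) hs
      rw [hcξ] at heq2
      rw [extCoeff_eq hinj (σ i') (l (σ i') - 1) (by have := hl (σ i'); omega)] at heq2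
      rw [← hcξ] at heq2
      rw [extCoeff_eq_zero_of_ge hinj' i' (l (σ i') - 1) (by omega)] at heq2
      exact hhigh (σ i') heq2
    · exact heq
    · exfalso
      have hs : l' i' - 1 < M (ξ' i') := by
        have h1 : extMult l' ξ' (ξ' i') = l' i' := extMult_eq hinj' i'
        have := hM2 (ξ' i')
        have := hl' i'
        omega
      have heq2 := hEq (ξ' i') (hSξ' i') (l' i' - 1) hs
      rw [extCoeff_eq hinj' i' (l' i' - 1) (by have := hl' i'; omega)] at heq2
      rw [hcξ] at heq2
      rw [extCoeff_eq_zero_of_ge hinj (σ i') (l' i' - 1) (by omega)] at heq2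
      exact hhigh' i' heq2.symm
  refine ⟨hlen, fun j => ?_⟩
  have hs : (j : ℕ) < M (ξ' i') := by
    have h1 : extMult l' ξ' (ξ' i') = l' i' := extMult_eq hinj' i'
    have := hM2 (ξ' i')
    have := j.isLt
    omega
  have heq2 := hEq (ξ' i') (hSξ' i') (j : ℕ) hs
  rw [extCoeff_eq hinj' i' (j : ℕ) j.isLt] at heq2
  rw [hcξ] at heq2
  rw [extCoeff_eq hinj (σ i') (j : ℕ) (by have := j.isLt; omega)] at heq2
  rw [← heq2]
  congr 1
end
end

section
/- Suppose the nodes ξ_1,…,ξ_n are pairwise distinct and a_{i,l_i−1} ≠ 0 for all i, and set C₁ = ‖U(ξ_1,l_1+1,…,ξ_n,l_n+1)^{−1}‖_∞. Then for every ε > 0 and every vector v ∈ ℂ^R with |v_k| ≤ ε for all k, the component of J_P(x)^{−1} v corresponding to the parameter ξ_i satisfies |[J_P(x)^{−1} v]_{ξ_i}| ≤ C₁ ε / |a_{i,l_i−1}| for every i = 1,…,n. -/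
open scoped BigOperators

noncomputable section

/-- The index (in the parameter vector) of the magnitude `a_{i,j}` (`j < l i`) or,
for `j = l i`, of the node `ξ_i`; the parameters are ordered
`(a_{1,0},…,a_{1,l_1−1}, ξ_1, …, a_{n,0},…,a_{n,l_n−1}, ξ_n)`. -/
def encP {n : ℕ} (l : Fin n → ℕ) (i : Fin n) (j : Fin (l i + 1)) :
    Fin (∑ i', (l i' + 1)) :=
  encC (fun i' => l i' + 1) i j

/-- The parameter vector `x = (a_{1,0},…,a_{1,l_1−1}, ξ_1, …, a_{n,0},…,a_{n,l_n−1}, ξ_n)`. -/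
def pronyParam {n : ℕ} (l : Fin n → ℕ) (ξ : Fin n → ℂ)
    (a : (i : Fin n) → Fin (l i) → ℂ) : Fin (∑ i', (l i' + 1)) → ℂ :=
  fun p => ∑ i, ∑ j : Fin (l i + 1),
    if p = encP l i j then (if h : (j : ℕ) < l i then a i ⟨j, h⟩ else ξ i) else 0

/-- The Prony map `P : ℂ^R → ℂ^R` sending the parameter vector
`x = (a_{1,0},…,a_{1,l_1−1}, ξ_1, …, a_{n,0},…,a_{n,l_n−1}, ξ_n)` to the moment vector
`(m_0,…,m_{R−1})`, `m_k = Σ_i Σ_{j<l_i} a_{i,j} (k)_j ξ_i^{k−j}`. -/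
def pronyMap {n : ℕ} (l : Fin n → ℕ) (x : Fin (∑ i', (l i' + 1)) → ℂ) :
    Fin (∑ i', (l i' + 1)) → ℂ :=
  fun k => ∑ i, ∑ j : Fin (l i),
    x (encP l i (Fin.castSucc j)) * ((k : ℕ).descFactorial j : ℂ) *
      (x (encP l i (Fin.last (l i)))) ^ ((k : ℕ) - (j : ℕ))

/-- The Jacobian matrix of the Prony map at `x`: the `(k,p)` entry is the partial
derivative of the `k`-th moment with respect to the `p`-th parameter. -/
def pronyJacobian {n : ℕ} (l : Fin n → ℕ) (x : Fin (∑ i', (l i' + 1)) → ℂ) :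
    Matrix (Fin (∑ i', (l i' + 1))) (Fin (∑ i', (l i' + 1))) ℂ :=
  fun k p => deriv (fun t : ℂ => pronyMap l (Function.update x p t) k) (x p)

/-! The Jacobian factors as `J_P(x) = U · B`, where `U = U(ξ_1,l_1+1,…,ξ_n,l_n+1)` and `B` is
upper triangular: the magnitude columns of `J_P` are columns of `U`, and since
`∂_ξ (k)_j ξ^{k-j} = (k)_{j+1} ξ^{k-j-1}`, the `ξ_i`-column of `J_P` is `Σ_j a_{i,j}` times the
column `(i, j+1)` of `U`. The `ξ_i`-row of `B` is therefore `a_{i,l_i-1}` times a unit vector, so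
the `ξ_i`-row of `J_P⁻¹ = B⁻¹ U⁻¹` is the `ξ_i`-row of `U⁻¹` divided by `a_{i,l_i-1}`, and its
action on `v` is bounded by the row sum of `U⁻¹` times `ε`. -/

section

open Matrix

theorem blockOff_add_le_blockOff {n : ℕ} {L : Fin n → ℕ} {i i' : Fin n} (h : i < i') :
    blockOff L i + L i ≤ blockOff L i' := by
  have hsub : insert i (Finset.Iio i) ⊆ Finset.Iio i' := by
    intro x hx
    rcases Finset.mem_insert.1 hx with rfl | hx
    · exact Finset.mem_Iio.2 h
    · exact Finset.mem_Iio.2 ((Finset.mem_Iio.1 hx).trans h)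
  have := Finset.sum_le_sum_of_subset (f := L) hsub
  rw [Finset.sum_insert (by simp)] at this
  unfold blockOff
  omega

theorem encC_eq_encC_iff {n : ℕ} {L : Fin n → ℕ} {i i' : Fin n} {j : Fin (L i)}
    {j' : Fin (L i')} : encC L i j = encC L i' j' ↔ i = i' ∧ (j : ℕ) = j' := by
  constructor
  · intro h
    have hval : blockOff L i + j = blockOff L i' + j' := congrArg Fin.val h
    rcases lt_trichotomy i i' with hlt | rfl | hgt
    · have := blockOff_add_le_blockOff (L := L) hlt; omega
    · exact ⟨rfl, by omega⟩
    · have := blockOff_add_le_blockOff (L := L) hgt; omega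
  · rintro ⟨rfl, h⟩
    rw [Fin.ext h]

theorem encP_eq_encP_iff {n : ℕ} {l : Fin n → ℕ} {i i' : Fin n} {j : Fin (l i + 1)}
    {j' : Fin (l i' + 1)} : encP l i j = encP l i' j' ↔ i = i' ∧ (j : ℕ) = j' :=
  encC_eq_encC_iff

def encCEquiv {n : ℕ} (L : Fin n → ℕ) : (Σ i, Fin (L i)) ≃ Fin (∑ i, L i) :=
  Equiv.ofBijective (fun x => encC L x.1 x.2) <|
    (Fintype.bijective_iff_injective_and_card _).2
      ⟨fun ⟨_, _⟩ ⟨_, _⟩ h => by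
        obtain ⟨rfl, h⟩ := encC_eq_encC_iff.1 h
        exact Sigma.ext rfl (heq_of_eq (Fin.ext h)), by simp⟩

theorem exists_eq_encP {n : ℕ} (l : Fin n → ℕ) (p : Fin (∑ i', (l i' + 1))) :
    ∃ i j, p = encP l i j :=
  let ⟨⟨i, j⟩, h⟩ := (encCEquiv (fun i => l i + 1)).surjective p
  ⟨i, j, h.symm⟩

theorem Fin.sum_sum_eq_single {n : ℕ} {L : Fin n → ℕ} {M : Type*} [AddCommMonoid M]
    (f : (i : Fin n) → Fin (L i) → M) (i₀ : Fin n) (j₀ : Fin (L i₀))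
    (h : ∀ i j, f i j ≠ 0 → i = i₀ ∧ (j : ℕ) = j₀) :
    ∑ i, ∑ j, f i j = f i₀ j₀ := by
  rw [Finset.sum_eq_single i₀, Finset.sum_eq_single j₀]
  · intro j _ hj
    by_contra hne
    exact hj (Fin.ext (h i₀ j hne).2)
  · simp
  · intro i _ hi
    refine Finset.sum_eq_zero fun j _ => ?_
    by_contra hne
    exact hi (h i j hne).1
  · simp

theorem sum_sum_ite_encC_eq {n : ℕ} {M : Type*} [AddCommMonoid M] (L : Fin n → ℕ)
    (g : (i : Fin n) → Fin (L i) → M) (i₀ : Fin n) (j₀ : Fin (L i₀)) :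
    ∑ i, ∑ j, (if encC L i₀ j₀ = encC L i j then g i j else 0) = g i₀ j₀ := by
  refine (Fin.sum_sum_eq_single _ i₀ j₀ fun i j h => ?_).trans (if_pos rfl)
  by_contra hne
  exact h (if_neg fun heq => hne ((encC_eq_encC_iff.1 heq).imp Eq.symm Eq.symm))

theorem confVand_encP {n : ℕ} (l : Fin n → ℕ) (ξ : Fin n → ℂ) (k : Fin (∑ i', (l i' + 1)))
    (i : Fin n) (j : Fin (l i + 1)) :
    confVand (fun i => l i + 1) ξ k (encP l i j) =
      ((k : ℕ).descFactorial j : ℂ) * ξ i ^ ((k : ℕ) - j) :=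
  sum_sum_ite_encC_eq (fun i => l i + 1) _ i j

theorem pronyParam_encP {n : ℕ} (l : Fin n → ℕ) (ξ : Fin n → ℂ)
    (a : (i : Fin n) → Fin (l i) → ℂ) (i : Fin n) (j : Fin (l i + 1)) :
    pronyParam l ξ a (encP l i j) = if h : (j : ℕ) < l i then a i ⟨j, h⟩ else ξ i :=
  sum_sum_ite_encC_eq (fun i => l i + 1) _ i j

@[simp]
theorem pronyParam_encP_castSucc {n : ℕ} (l : Fin n → ℕ) (ξ : Fin n → ℂ)
    (a : (i : Fin n) → Fin (l i) → ℂ) (i : Fin n) (j : Fin (l i)) :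
    pronyParam l ξ a (encP l i j.castSucc) = a i j := by
  simp [pronyParam_encP]

@[simp]
theorem pronyParam_encP_last {n : ℕ} (l : Fin n → ℕ) (ξ : Fin n → ℂ)
    (a : (i : Fin n) → Fin (l i) → ℂ) (i : Fin n) :
    pronyParam l ξ a (encP l i (Fin.last (l i))) = ξ i := by
  simp [pronyParam_encP]

theorem encP_castSucc_ne_encP_last {n : ℕ} {l : Fin n → ℕ} {i i' : Fin n} (j : Fin (l i')) :
    encP l i' j.castSucc ≠ encP l i (Fin.last (l i)) := fun h => by
  obtain ⟨rfl, h⟩ := encP_eq_encP_iff.1 h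
  simp only [Fin.val_last, Fin.val_castSucc] at h
  omega

theorem Matrix.inv_mulVec_apply_of_row_eq_single {m K : Type*} [Fintype m] [DecidableEq m]
    [Field K] {B : Matrix m m K} (hB : IsUnit B.det) {p : m} {α : K}
    (hrow : B p = Pi.single p α) (w : m → K) : (B⁻¹ *ᵥ w) p = α⁻¹ * w p := by
  have hα : α ≠ 0 := by
    rintro rfl
    exact hB.ne_zero (det_eq_zero_of_row_eq_zero p fun q => by simp [hrow])
  have hw : w p = α * (B⁻¹ *ᵥ w) p := by
    conv_lhs => rw [← one_mulVec w, ← mul_nonsing_inv B hB, ← mulVec_mulVec]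
    rw [mulVec, hrow, single_dotProduct]
  rw [hw, inv_mul_cancel_left₀ hα]

theorem Matrix.norm_mulVec_apply_le {m n α : Type*} [Fintype n] [SeminormedRing α]
    (A : Matrix m n α) {v : n → α} {ε : ℝ} (hv : ∀ k, ‖v k‖ ≤ ε) (r : m) :
    ‖(A *ᵥ v) r‖ ≤ (∑ c, ‖A r c‖) * ε :=
  calc ‖∑ c, A r c * v c‖ ≤ ∑ c, ‖A r c‖ * ‖v c‖ :=
        (norm_sum_le _ _).trans (Finset.sum_le_sum fun c _ => norm_mul_le _ _)
    _ ≤ ∑ c, ‖A r c‖ * ε := Finset.sum_le_sum fun c _ => by gcongr; exact hv c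
    _ = (∑ c, ‖A r c‖) * ε := (Finset.sum_mul _ _ _).symm

theorem pronyJacobian_apply {n : ℕ} (l : Fin n → ℕ) (x : Fin (∑ i', (l i' + 1)) → ℂ)
    (k p : Fin (∑ i', (l i' + 1))) :
    pronyJacobian l x k p = ∑ i, ∑ j : Fin (l i),
      ((if encP l i j.castSucc = p then 1 else 0) * ((k : ℕ).descFactorial j : ℂ) *
          x (encP l i (Fin.last (l i))) ^ ((k : ℕ) - j) +
        x (encP l i j.castSucc) * ((k : ℕ).descFactorial j : ℂ) *
          (((k : ℕ) - j : ℕ) * x (encP l i (Fin.last (l i))) ^ ((k : ℕ) - j - 1) *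
            (if encP l i (Fin.last (l i)) = p then 1 else 0))) := by
  have hcoord : ∀ q, HasDerivAt (fun t => Function.update x p t q)
      ((Pi.single p 1 : Fin (∑ i', (l i' + 1)) → ℂ) q) (x p) :=
    hasDerivAt_pi.1 (hasDerivAt_update x p (x p))
  refine HasDerivAt.deriv ?_
  convert HasDerivAt.fun_sum (u := Finset.univ) fun i _ =>
    HasDerivAt.fun_sum (u := Finset.univ) fun (j : Fin (l i)) _ =>
    ((hcoord (encP l i j.castSucc)).mul_const ((k : ℕ).descFactorial j : ℂ)).fun_mul
      ((hcoord (encP l i (Fin.last (l i)))).fun_pow ((k : ℕ) - j)) using 1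
  · rfl
  · simp only [Function.update_eq_self, Pi.single_apply]

variable {n : ℕ} (l : Fin n → ℕ) (ξ : Fin n → ℂ) (a : (i : Fin n) → Fin (l i) → ℂ)

theorem pronyJacobian_pronyParam_castSucc (k : Fin (∑ i', (l i' + 1))) (i : Fin n)
    (j : Fin (l i)) :
    pronyJacobian l (pronyParam l ξ a) k (encP l i j.castSucc) =
      confVand (fun i => l i + 1) ξ k (encP l i j.castSucc) := by
  have hnode : ∀ i', encP l i' (Fin.last (l i')) ≠ encP l i j.castSucc :=
    fun _ => (encP_castSucc_ne_encP_last j).symm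
  simp only [pronyJacobian_apply, hnode, if_false, mul_zero, add_zero]
  rw [Fin.sum_sum_eq_single _ i j, if_pos rfl, one_mul, pronyParam_encP_last]
  · rw [confVand_encP, Fin.val_castSucc]
  · intro i' j' h
    have hp : encP l i' j'.castSucc = encP l i j.castSucc := by
      by_contra hne
      simp [hne] at h
    obtain ⟨rfl, hj⟩ := encP_eq_encP_iff.1 hp
    exact ⟨rfl, by simpa using hj⟩

theorem pronyJacobian_pronyParam_last (k : Fin (∑ i', (l i' + 1))) (i : Fin n) :
    pronyJacobian l (pronyParam l ξ a) k (encP l i (Fin.last (l i))) =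
      ∑ j : Fin (l i), a i j * confVand (fun i => l i + 1) ξ k (encP l i j.succ) := by
  have hnode : ∀ i', encP l i' (Fin.last (l i')) = encP l i (Fin.last (l i)) ↔ i' = i :=
    fun i' => ⟨fun h => (encP_eq_encP_iff.1 h).1, by rintro rfl; rfl⟩
  simp only [pronyJacobian_apply, encP_castSucc_ne_encP_last, hnode, if_false, zero_mul, zero_add, mul_ite, mul_one,
    mul_zero, pronyParam_encP_castSucc, pronyParam_encP_last]
  rw [Finset.sum_eq_single i (fun i' _ hi => by simp [hi]) (by simp)]
  refine Finset.sum_congr rfl fun j _ => ?_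
  rw [if_pos rfl, confVand_encP, Fin.val_succ, Nat.descFactorial_succ, Nat.sub_add_eq]
  push_cast
  ring

def pronyFactorCol : (Σ i, Fin (l i + 1)) → Fin (∑ i', (l i' + 1)) → ℂ
  | ⟨i, j⟩ => Fin.lastCases (∑ j' : Fin (l i), a i j' • Pi.single (encP l i j'.succ) 1)
      (fun j' => Pi.single (encP l i j'.castSucc) 1) j

def pronyFactor : Matrix (Fin (∑ i', (l i' + 1))) (Fin (∑ i', (l i' + 1))) ℂ :=
  Matrix.of fun p q => pronyFactorCol l a ((encCEquiv fun i => l i + 1).symm q) p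

@[simp]
theorem pronyFactorCol_last (i : Fin n) :
    pronyFactorCol l a ⟨i, Fin.last (l i)⟩ =
      ∑ j : Fin (l i), a i j • Pi.single (encP l i j.succ) 1 := by
  simp [pronyFactorCol]

@[simp]
theorem pronyFactorCol_castSucc (i : Fin n) (j : Fin (l i)) :
    pronyFactorCol l a ⟨i, j.castSucc⟩ = Pi.single (encP l i j.castSucc) 1 := by
  simp [pronyFactorCol]

theorem pronyFactor_apply_encP (p : Fin (∑ i', (l i' + 1))) (i : Fin n) (j : Fin (l i + 1)) :
    pronyFactor l a p (encP l i j) = pronyFactorCol l a ⟨i, j⟩ p := by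
  simp only [pronyFactor, of_apply]
  rw [show encP l i j = encCEquiv (fun i => l i + 1) ⟨i, j⟩ from rfl, Equiv.symm_apply_apply]

theorem pronyJacobian_pronyParam_eq_confVand_mul :
    pronyJacobian l (pronyParam l ξ a) = confVand (fun i => l i + 1) ξ * pronyFactor l a := by
  ext k q
  obtain ⟨i, j, rfl⟩ := exists_eq_encP l q
  have hcol : (confVand (fun i => l i + 1) ξ * pronyFactor l a) k (encP l i j) =
      (confVand (fun i => l i + 1) ξ *ᵥ pronyFactorCol l a ⟨i, j⟩) k := by
    simp only [mul_apply, mulVec, dotProduct, pronyFactor_apply_encP]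
  rw [hcol]
  induction j using Fin.lastCases with
  | last =>
    simp [pronyJacobian_pronyParam_last, mulVec_sum, mulVec_smul]
  | cast j =>
    simp [pronyJacobian_pronyParam_castSucc]

theorem pronyFactor_isUpperTriangular : (pronyFactor l a).IsUpperTriangular := by
  intro p q (hqp : q < p)
  obtain ⟨i, j, rfl⟩ := exists_eq_encP l q
  rw [pronyFactor_apply_encP]
  induction j using Fin.lastCases with
  | last =>
    rw [pronyFactorCol_last, Finset.sum_apply]
    refine Finset.sum_eq_zero fun j _ => ?_
    have hp : p ≠ encP l i j.succ := by
      rintro rfl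
      exact absurd hqp (not_lt.2 (Nat.add_le_add_left j.isLt _))
    simp [hp]
  | cast j => simp [hqp.ne']

theorem pronyFactor_row_last (i : Fin n) (hi : 1 ≤ l i) :
    pronyFactor l a (encP l i (Fin.last (l i))) =
      Pi.single (encP l i (Fin.last (l i))) (a i ⟨l i - 1, Nat.sub_one_lt_of_lt hi⟩) := by
  funext q
  obtain ⟨i', j, rfl⟩ := exists_eq_encP l q
  rw [pronyFactor_apply_encP]
  induction j using Fin.lastCases with
  | last =>
    simp only [pronyFactorCol_last, Finset.sum_apply, Pi.smul_apply, Pi.single_apply,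
      encP_eq_encP_iff, Fin.val_succ, Fin.val_last, smul_eq_mul, mul_ite, mul_one, mul_zero]
    rcases eq_or_ne i' i with rfl | hne
    · rw [Finset.sum_eq_single ⟨l i' - 1, Nat.sub_one_lt_of_lt hi⟩
        (fun j _ hj => if_neg fun h => hj (Fin.ext (by simp only at h ⊢; omega))) (by simp)]
      simp [Nat.sub_add_cancel hi]
    · simp [hne, hne.symm]
  | cast j =>
    have hj : (j : ℕ) ≠ l i' := j.isLt.ne
    rcases eq_or_ne i' i with rfl | hne
    · simp [encP_eq_encP_iff, hj, hj.symm]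
    · simp [encP_eq_encP_iff, hne, hne.symm]

theorem isUnit_det_pronyFactor (hl : ∀ i, 1 ≤ l i)
    (hhigh : ∀ i, a i ⟨l i - 1, Nat.sub_one_lt_of_lt (hl i)⟩ ≠ 0) :
    IsUnit (pronyFactor l a).det := by
  rw [det_of_isUpperTriangular (pronyFactor_isUpperTriangular l a)]
  refine (Finset.prod_ne_zero_iff.2 fun q _ => ?_).isUnit
  obtain ⟨i, j, rfl⟩ := exists_eq_encP l q
  induction j using Fin.lastCases with
  | last => simpa [pronyFactor_row_last l a i (hl i)] using hhigh i
  | cast j => simp [pronyFactor_apply_encP]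

end

/-- let `C₁ = ‖U(ξ_1,l_1+1,…,ξ_n,l_n+1)⁻¹‖_∞` (maximal row sum of absolute
values).  If the nodes are pairwise distinct and the highest magnitudes are nonzero, then
for every `ε > 0` and every `v` with `|v_k| ≤ ε`, the component of `J_P(x)⁻¹ v`
corresponding to the node `ξ_i` has absolute value at most `C₁ ε / |a_{i,l_i−1}|`. -/
theorem pronyJacobian_inv_node_component_bound
    (n : ℕ) (l : Fin n → ℕ) (hl : ∀ i, 1 ≤ l i)
    (ξ : Fin n → ℂ) (a : (i : Fin n) → Fin (l i) → ℂ)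
    (hhigh : ∀ i, a i ⟨l i - 1, by have := hl i; omega⟩ ≠ 0)
    (C₁ : ℝ)
    (hC₁ : C₁ = ⨆ r, ∑ c, ‖((confVand (fun i => l i + 1) ξ)⁻¹) r c‖)
    (ε : ℝ) (v : Fin (∑ i', (l i' + 1)) → ℂ)
    (hv : ∀ k, ‖v k‖ ≤ ε) :
    ∀ i : Fin n,
      ‖Matrix.mulVec (pronyJacobian l (pronyParam l ξ a))⁻¹ v
            (encP l i (Fin.last (l i)))‖ ≤
        C₁ * ε / ‖a i ⟨l i - 1, by have := hl i; omega⟩‖ := by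
  intro i
  set U := confVand (fun i => l i + 1) ξ
  set p := encP l i (Fin.last (l i))
  have hε : 0 ≤ ε := (norm_nonneg _).trans (hv p)
  have hrow : ∑ c, ‖U⁻¹ p c‖ ≤ C₁ :=
    hC₁ ▸ le_ciSup (f := fun r => ∑ c, ‖U⁻¹ r c‖) (Set.finite_range _).bddAbove p
  rw [pronyJacobian_pronyParam_eq_confVand_mul, Matrix.mul_inv_rev, ← Matrix.mulVec_mulVec,
    Matrix.inv_mulVec_apply_of_row_eq_single (isUnit_det_pronyFactor l a hl hhigh)
      (pronyFactor_row_last l a i (hl i)),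
    norm_mul, norm_inv, div_eq_inv_mul]
  gcongr
  calc ‖U⁻¹.mulVec v p‖ ≤ (∑ c, ‖U⁻¹ p c‖) * ε := Matrix.norm_mulVec_apply_le _ hv p
    _ ≤ C₁ * ε := by gcongr
end
end
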